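/- arXiv:1906.04931 — 4 statements merged into one kernel-verified Lean document; each statement's English description precedes it below -/
import Mathlib

section
/- Let S = {1, …, n}, let r ∈ ℕ with 2 ≤ r ≤ n, and let 𝓗′ be a nonempty collection of subsets of S such that every X ∈ 𝓗′ satisfies r ≤ |X| < n, and any two distinct X, Y ∈ 𝓗′ satisfy |X ∩ Y| ≤ r − 2. Define 𝓒_r := {A ⊆ S : |A| = r and A ⊆ X for some X ∈ 𝓗′} and 𝓗 := 𝓗′ ∪ {A ⊆ S : |A| = r − 1 and every r-subset D of S with A ⊂ D satisfies D ∉ 𝓒_r}. Then there exists a paving matroid on S of rank r whose set of hyperplanes is exactly 𝓗, whose set of circuits of cardinality r is exactly 𝓒_r, and whose set of bases is exactly the set of r-subsets of S not in 𝓒_r. -/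
open Set

namespace Matroid

variable {α : Type*}

/-- A circuit of a matroid: a minimal dependent set. -/
def Circuit' (M : Matroid α) (C : Set α) : Prop :=
  M.Dep C ∧ ∀ D, D ⊂ C → M.Indep D

/-- The rank of a subset `X`: the maximum cardinality of an independent subset of `X`. -/
noncomputable def rk' (M : Matroid α) (X : Set α) : ℕ :=
  sSup {n | ∃ I, I ⊆ X ∧ M.Indep I ∧ I.ncard = n}

/-- A hyperplane of a matroid of rank `r`: a maximal subset of the ground set of rank `r - 1`. -/
def Hyperplane' (M : Matroid α) (H : Set α) : Prop :=
  H ⊆ M.E ∧ M.rk' H = M.rk' M.E - 1 ∧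
    ∀ Y, H ⊂ Y → Y ⊆ M.E → M.rk' Y ≠ M.rk' M.E - 1

/-- A matroid is paving if it has no circuits of cardinality less than its rank. -/
def Paving (M : Matroid α) : Prop :=
  ∀ C, M.Circuit' C → M.rk' M.E ≤ C.ncard

/-- A matroid is sparse-paving if both it and its dual are paving. -/
def SparsePaving (M : Matroid α) : Prop :=
  M.Paving ∧ M✶.Paving

end Matroid

/-!
Declare an `r`-subset of `S` dependent exactly when it lies in a member of `𝓗`. Two members of `𝓗`
share at most `r - 2` elements, so an `(r - 1)`-set lies in at most one of them. Hence, if every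
one-element extension of an `(r - 1)`-set `I` by an element of `T` is dependent, all these
extensions lie in one and the same member of `𝓗`, which then contains `T`. This gives the
augmentation axiom, and it shows that a set of at least `r` elements has full rank unless it is
contained in a member of `𝓗`; the hyperplanes are read off from this.
-/

namespace Matroid

variable {α : Type*}

theorem rk'_le_of_forall_indep {M : Matroid α} {X : Set α} {k : ℕ}
    (h : ∀ I ⊆ X, M.Indep I → I.ncard ≤ k) : M.rk' X ≤ k :=
  csSup_le' <| by rintro _ ⟨I, hIX, hI, rfl⟩; exact h I hIX hI

theorem Indep.ncard_le_rk' {M : Matroid α} {I X : Set α} {k : ℕ}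
    (hbdd : ∀ J ⊆ X, M.Indep J → J.ncard ≤ k) (hI : M.Indep I) (hIX : I ⊆ X) :
    I.ncard ≤ M.rk' X :=
  le_csSup ⟨k, by rintro _ ⟨J, hJX, hJ, rfl⟩; exact hbdd J hJX hJ⟩ ⟨I, hIX, hI, rfl⟩

def coveredSubsets (S : Set α) (r : ℕ) (𝓗 : Set (Set α)) : Set (Set α) :=
  {A | A ⊆ S ∧ A.ncard = r ∧ ∃ X ∈ 𝓗, A ⊆ X}

def PavingIndep (S : Set α) (r : ℕ) (𝓗 : Set (Set α)) (I : Set α) : Prop :=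
  I ⊆ S ∧ I.ncard ≤ r ∧ I ∉ coveredSubsets S r 𝓗

structure IsPavingFamily (S : Set α) (r : ℕ) (𝓗 : Set (Set α)) : Prop where
  finite : S.Finite
  two_le : 2 ≤ r
  subset : ∀ X ∈ 𝓗, X ⊆ S
  ncard_inter_le : 𝓗.Pairwise fun X Y => (X ∩ Y).ncard ≤ r - 2

variable {S : Set α} {r : ℕ} {𝓗 : Set (Set α)}

theorem pavingIndep_empty (hr : r ≠ 0) : PavingIndep S r 𝓗 ∅ :=
  ⟨empty_subset S, by simp, fun h => hr (by simpa using h.2.1.symm)⟩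

theorem PavingIndep.subset {I J : Set α} (hS : S.Finite) (hJ : PavingIndep S r 𝓗 J)
    (hIJ : I ⊆ J) : PavingIndep S r 𝓗 I := by
  obtain ⟨hJS, hJr, hJC⟩ := hJ
  have hJfin := hS.subset hJS
  refine ⟨hIJ.trans hJS, (ncard_le_ncard hIJ hJfin).trans hJr, fun hI => hJC ?_⟩
  rwa [← eq_of_subset_of_ncard_le hIJ (hJr.trans_eq hI.2.1.symm) hJfin]

namespace IsPavingFamily

theorem eq_of_subset_inter (h : IsPavingFamily S r 𝓗) {X Y I : Set α} (hX : X ∈ 𝓗) (hY : Y ∈ 𝓗)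
    (hI : I.ncard = r - 1) (hIXY : I ⊆ X ∩ Y) : X = Y := by
  by_contra hXY
  have := ncard_le_ncard hIXY ((h.finite.subset (h.subset X hX)).inter_of_left Y)
  have := h.ncard_inter_le hX hY hXY
  have := h.two_le
  omega

theorem exists_superset_of_forall_insert_mem (h : IsPavingFamily S r 𝓗) {I T : Set α}
    (hI : I.ncard = r - 1) (hTI : (T \ I).Nonempty)
    (hT : ∀ e ∈ T \ I, insert e I ∈ coveredSubsets S r 𝓗) : ∃ X ∈ 𝓗, T ⊆ X := by
  obtain ⟨e₀, he₀⟩ := hTI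
  obtain ⟨-, -, X, hX, he₀X⟩ := hT e₀ he₀
  refine ⟨X, hX, fun x hxT => ?_⟩
  by_cases hxI : x ∈ I
  · exact he₀X (mem_insert_of_mem _ hxI)
  obtain ⟨-, -, Y, hY, hxY⟩ := hT x ⟨hxT, hxI⟩
  have hXY : X = Y := h.eq_of_subset_inter hX hY hI
    (subset_inter ((subset_insert _ _).trans he₀X) ((subset_insert _ _).trans hxY))
  exact hXY ▸ hxY (mem_insert _ _)

theorem exists_subset_notMem_or_exists_superset (h : IsPavingFamily S r 𝓗) {T : Set α}
    (hT : r ≤ T.ncard) :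
    (∃ D ⊆ T, D.ncard = r ∧ D ∉ coveredSubsets S r 𝓗) ∨ ∃ X ∈ 𝓗, T ⊆ X := by
  refine or_iff_not_imp_left.2 fun hall => ?_
  push Not at hall
  have := h.two_le
  obtain ⟨A, hAT, hA⟩ := exists_subset_card_eq hT
  have hAfin : A.Finite := finite_of_ncard_ne_zero (by omega)
  obtain ⟨a, ha⟩ := nonempty_of_ncard_ne_zero (s := A) (by omega)
  have hAa : (A \ {a}).ncard = r - 1 := by rw [ncard_sdiff_singleton_of_mem ha, hA]
  refine h.exists_superset_of_forall_insert_mem hAa ⟨a, hAT ha, fun haA => haA.2 rfl⟩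
    fun e he => hall _ (insert_subset he.1 (sdiff_subset.trans hAT)) ?_
  rw [ncard_insert_of_notMem he.2 hAfin.sdiff, hAa]
  omega

theorem exists_insert_pavingIndep (h : IsPavingFamily S r 𝓗) {I J : Set α}
    (hI : PavingIndep S r 𝓗 I) (hJ : PavingIndep S r 𝓗 J) (hIJ : I.ncard < J.ncard) :
    ∃ e ∈ J, e ∉ I ∧ PavingIndep S r 𝓗 (insert e I) := by
  obtain ⟨hIS, -, -⟩ := hI
  obtain ⟨hJS, hJr, hJC⟩ := hJ
  have hIfin := h.finite.subset hIS
  by_contra! hnone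
  have hins : ∀ e ∈ J \ I, insert e I ∈ coveredSubsets S r 𝓗 := fun e ⟨heJ, heI⟩ => by
    by_contra hC
    refine hnone e heJ heI ⟨insert_subset (hJS heJ) hIS, ?_, hC⟩
    rw [ncard_insert_of_notMem heI hIfin]
    omega
  obtain ⟨e₀, he₀J, he₀I⟩ := exists_mem_notMem_of_ncard_lt_ncard hIJ hIfin
  have hIr : I.ncard = r - 1 := by
    have := (hins e₀ ⟨he₀J, he₀I⟩).2.1
    rw [ncard_insert_of_notMem he₀I hIfin] at this
    omega
  obtain ⟨X, hX, hJX⟩ := h.exists_superset_of_forall_insert_mem hIr ⟨e₀, he₀J, he₀I⟩ hins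
  exact hJC ⟨hJS, by omega, X, hX, hJX⟩

def matroid (h : IsPavingFamily S r 𝓗) : Matroid α :=
  (IndepMatroid.ofFinite h.finite (PavingIndep S r 𝓗)
    (pavingIndep_empty (by have := h.two_le; omega))
    (fun _ _ hJ hIJ => hJ.subset h.finite hIJ) (fun _ _ => h.exists_insert_pavingIndep)
    (fun _ hI => hI.1)).matroid

section matroid

variable (h : IsPavingFamily S r 𝓗)

theorem rk'_le (X : Set α) : h.matroid.rk' X ≤ r :=
  rk'_le_of_forall_indep fun _ _ hI => hI.2.1

theorem ncard_le_rk' {I X : Set α} (hI : h.matroid.Indep I) (hIX : I ⊆ X) :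
    I.ncard ≤ h.matroid.rk' X :=
  hI.ncard_le_rk' (fun _ _ hJ => hJ.2.1) hIX

theorem rk'_eq_of_subset {D X : Set α} (hD : h.matroid.Indep D) (hDX : D ⊆ X) (hDr : D.ncard = r) :
    h.matroid.rk' X = r :=
  (h.rk'_le X).antisymm (hDr ▸ h.ncard_le_rk' hD hDX)

theorem rk'_eq_ncard {X : Set α} (hXS : X ⊆ S) (hX : X.ncard < r) :
    h.matroid.rk' X = X.ncard :=
  (rk'_le_of_forall_indep fun _ hIX _ => ncard_le_ncard hIX (h.finite.subset hXS)).antisymm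
    (h.ncard_le_rk' ⟨hXS, hX.le, fun hC => hX.ne hC.2.1⟩ Subset.rfl)

theorem rk'_le_sub_one {X Y : Set α} (hY : Y ∈ 𝓗) (hXY : X ⊆ Y) : h.matroid.rk' X ≤ r - 1 :=
  rk'_le_of_forall_indep fun _ hIX ⟨hIS, hIr, hIC⟩ => by
    by_contra
    exact hIC ⟨hIS, by omega, Y, hY, hIX.trans hXY⟩

theorem rk'_eq_sub_one {X : Set α} (hX : X ∈ 𝓗) (hXr : r - 1 ≤ X.ncard) :
    h.matroid.rk' X = r - 1 := by
  obtain ⟨I, hIX, hI⟩ := exists_subset_card_eq hXr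
  have hIC : I ∉ coveredSubsets S r 𝓗 := fun hC => by have := hC.2.1; have := h.two_le; omega
  exact (h.rk'_le_sub_one hX Subset.rfl).antisymm
    (hI ▸ h.ncard_le_rk' ⟨hIX.trans (h.subset X hX), by omega, hIC⟩ hIX)

theorem exists_indep_ncard_eq (hlt : ∀ X ∈ 𝓗, X.ncard < S.ncard) (hrS : r ≤ S.ncard) :
    ∃ B, h.matroid.Indep B ∧ B.ncard = r := by
  obtain ⟨D, hDS, hDr, hDC⟩ | ⟨X, hX, hSX⟩ := h.exists_subset_notMem_or_exists_superset hrS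
  · exact ⟨D, ⟨hDS, hDr.le, hDC⟩, hDr⟩
  · exact absurd (ncard_le_ncard hSX (h.finite.subset (h.subset X hX))) (hlt X hX).not_ge

theorem rk'_ground (hlt : ∀ X ∈ 𝓗, X.ncard < S.ncard) (hrS : r ≤ S.ncard) :
    h.matroid.rk' h.matroid.E = r :=
  let ⟨_, hB, hBr⟩ := h.exists_indep_ncard_eq hlt hrS
  h.rk'_eq_of_subset hB hB.subset_ground hBr

theorem le_ncard_of_dep {C : Set α} (hC : h.matroid.Dep C) : r ≤ C.ncard := by
  by_contra! hlt
  exact hC.1 ⟨hC.2, hlt.le, fun hC' => hlt.ne hC'.2.1⟩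

theorem paving (hlt : ∀ X ∈ 𝓗, X.ncard < S.ncard) (hrS : r ≤ S.ncard) : h.matroid.Paving :=
  fun _ hC => (h.rk'_ground hlt hrS).trans_le (h.le_ncard_of_dep hC.1)

theorem circuit'_and_ncard_eq_iff {C : Set α} :
    h.matroid.Circuit' C ∧ C.ncard = r ↔ C ∈ coveredSubsets S r 𝓗 := by
  refine ⟨fun ⟨⟨hdep, _⟩, hCr⟩ => ?_,
    fun hC => ⟨⟨⟨fun hI => hI.2.2 hC, hC.1⟩, fun D hDC => ?_⟩, hC.2.1⟩⟩
  · by_contra hC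
    exact hdep.1 ⟨hdep.2, hCr.le, hC⟩
  · have hDr : D.ncard < r := hC.2.1 ▸ ncard_lt_ncard hDC (h.finite.subset hC.1)
    exact ⟨hDC.subset.trans hC.1, hDr.le, fun hD => hDr.ne hD.2.1⟩

theorem isBase_iff (hlt : ∀ X ∈ 𝓗, X.ncard < S.ncard) (hrS : r ≤ S.ncard) {B : Set α} :
    h.matroid.IsBase B ↔ B ⊆ S ∧ B.ncard = r ∧ B ∉ coveredSubsets S r 𝓗 := by
  rw [isBase_iff_maximal_indep]
  refine ⟨fun hB => ⟨hB.1.1, ?_, hB.1.2.2⟩,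
    fun ⟨hBS, hBr, hBC⟩ => ⟨⟨hBS, hBr.le, hBC⟩, fun I hI hBI => ?_⟩⟩
  · obtain ⟨J, hJ, hJr⟩ := h.exists_indep_ncard_eq hlt hrS
    refine hB.1.2.1.antisymm (not_lt.1 fun hBJ => ?_)
    obtain ⟨e, -, heB, he⟩ := h.exists_insert_pavingIndep hB.1 hJ (hJr ▸ hBJ)
    exact heB (hB.2 he (subset_insert e B) (mem_insert e B))
  · exact (eq_of_subset_of_ncard_le hBI (hBr ▸ hI.2.1) (h.finite.subset hI.1)).symm.subset

theorem hyperplane'_of_mem (hlt : ∀ X ∈ 𝓗, X.ncard < S.ncard) (hrS : r ≤ S.ncard) {X : Set α}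
    (hX : X ∈ 𝓗) (hXr : r ≤ X.ncard) : h.matroid.Hyperplane' X := by
  have := h.two_le
  rw [Hyperplane', h.rk'_ground hlt hrS, h.rk'_eq_sub_one hX (by omega)]
  refine ⟨h.subset X hX, rfl, fun Y hXY hYS hYr => ?_⟩
  obtain ⟨D, hDY, hDr, hDC⟩ | ⟨Z, hZ, hYZ⟩ :=
    h.exists_subset_notMem_or_exists_superset
      (hXr.trans (ncard_le_ncard hXY.subset (h.finite.subset hYS)))
  · have := h.rk'_eq_of_subset ⟨hDY.trans hYS, hDr.le, hDC⟩ hDY hDr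
    omega
  · have hXZ : X ≠ Z := fun hXZ => hXY.not_subset (hXZ ▸ hYZ)
    have := ncard_le_ncard (subset_inter Subset.rfl (hXY.subset.trans hYZ))
      ((h.finite.subset (h.subset X hX)).inter_of_left Z)
    have := h.ncard_inter_le hX hZ hXZ
    omega

theorem hyperplane'_of_ncard_eq (hlt : ∀ X ∈ 𝓗, X.ncard < S.ncard) (hrS : r ≤ S.ncard)
    {X : Set α} (hXS : X ⊆ S) (hXr : X.ncard = r - 1)
    (hX : ∀ D, D ⊆ S → D.ncard = r → X ⊂ D → D ∉ coveredSubsets S r 𝓗) :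
    h.matroid.Hyperplane' X := by
  have := h.two_le
  rw [Hyperplane', h.rk'_ground hlt hrS, h.rk'_eq_ncard hXS (by omega), hXr]
  refine ⟨hXS, rfl, fun Y hXY hYS => ?_⟩
  obtain ⟨e, heY, heX⟩ := exists_of_ssubset hXY
  have hDY : insert e X ⊆ Y := insert_subset heY hXY.subset
  have hDr : (insert e X).ncard = r := by
    rw [ncard_insert_of_notMem heX (h.finite.subset hXS)]
    omega
  rw [h.rk'_eq_of_subset ⟨hDY.trans hYS, hDr.le, hX _ (hDY.trans hYS) hDr (ssubset_insert heX)⟩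
    hDY hDr]
  omega

theorem mem_of_hyperplane' (hlt : ∀ X ∈ 𝓗, X.ncard < S.ncard) (hrS : r ≤ S.ncard) {X : Set α}
    (hX : h.matroid.Hyperplane' X) : X ∈ 𝓗 ∨
      (X ⊆ S ∧ X.ncard = r - 1 ∧ ∀ D, D ⊆ S → D.ncard = r → X ⊂ D → D ∉ coveredSubsets S r 𝓗) := by
  have := h.two_le
  obtain ⟨hXS, hXrk, hmax⟩ := hX
  rw [h.rk'_ground hlt hrS] at hXrk hmax
  have hXr : r - 1 ≤ X.ncard := by
    by_contra! hXr
    rw [h.rk'_eq_ncard hXS (by omega)] at hXrk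
    omega
  have hnot : ∀ Y ∈ 𝓗, ¬X ⊂ Y := fun Y hY hXY => hmax Y hXY (h.subset Y hY)
    (h.rk'_eq_sub_one hY (hXr.trans (ncard_le_ncard hXY.subset (h.finite.subset (h.subset Y hY)))))
  obtain hXr' | hXr' := hXr.eq_or_lt
  · exact Or.inr ⟨hXS, hXr'.symm,
      fun D _ _ hXD ⟨_, _, Y, hY, hDY⟩ => hnot Y hY (hXD.trans_subset hDY)⟩
  obtain ⟨D, hDX, hDr, hDC⟩ | ⟨Y, hY, hXY⟩ :=
    h.exists_subset_notMem_or_exists_superset (show r ≤ X.ncard by omega)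
  · have := h.rk'_eq_of_subset ⟨hDX.trans hXS, hDr.le, hDC⟩ hDX hDr
    omega
  · obtain rfl | hne := eq_or_ne X Y
    · exact Or.inl hY
    · exact absurd (ssubset_of_subset_of_ne hXY hne) (hnot Y hY)

theorem hyperplane'_iff (hcard : ∀ X ∈ 𝓗, r ≤ X.ncard ∧ X.ncard < S.ncard) (hrS : r ≤ S.ncard)
    {X : Set α} : h.matroid.Hyperplane' X ↔ X ∈ 𝓗 ∪ {A | A ⊆ S ∧ A.ncard = r - 1 ∧
      ∀ D, D ⊆ S → D.ncard = r → A ⊂ D → D ∉ coveredSubsets S r 𝓗} := by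
  have hlt : ∀ X ∈ 𝓗, X.ncard < S.ncard := fun X hX => (hcard X hX).2
  refine ⟨h.mem_of_hyperplane' hlt hrS, ?_⟩
  rintro (hX | ⟨hXS, hXr, hX⟩)
  · exact h.hyperplane'_of_mem hlt hrS hX (hcard X hX).1
  · exact h.hyperplane'_of_ncard_eq hlt hrS hXS hXr hX

end matroid

end IsPavingFamily

end Matroid

theorem stmt3_general {α : Type*} (S : Set α) (hS : S.Finite) (n r : ℕ) (hn : S.ncard = n)
    (hr2 : 2 ≤ r) (hrn : r ≤ n)
    (H' : Set (Set α)) (hsub : ∀ X ∈ H', X ⊆ S)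
    (hcard : ∀ X ∈ H', r ≤ X.ncard ∧ X.ncard < n)
    (hint : ∀ X ∈ H', ∀ Y ∈ H', X ≠ Y → (X ∩ Y).ncard ≤ r - 2)
    (Cr : Set (Set α)) (hCr : Cr = {A | A ⊆ S ∧ A.ncard = r ∧ ∃ X ∈ H', A ⊆ X})
    (H : Set (Set α))
    (hH : H = H' ∪ {A | A ⊆ S ∧ A.ncard = r - 1 ∧
      ∀ D, D ⊆ S → D.ncard = r → A ⊂ D → D ∉ Cr}) :
    ∃ M : Matroid α, M.E = S ∧ M.rk' M.E = r ∧ M.Paving ∧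
      (∀ X, M.Hyperplane' X ↔ X ∈ H) ∧
      (∀ C, (M.Circuit' C ∧ C.ncard = r) ↔ C ∈ Cr) ∧
      (∀ B, M.IsBase B ↔ (B ⊆ S ∧ B.ncard = r ∧ B ∉ Cr)) := by
  subst hn hCr hH
  have h : Matroid.IsPavingFamily S r H' := ⟨hS, hr2, hsub, hint⟩
  have hlt : ∀ X ∈ H', X.ncard < S.ncard := fun X hX => (hcard X hX).2
  exact ⟨h.matroid, rfl, h.rk'_ground hlt hrn, h.paving hlt hrn,
    fun _ => h.hyperplane'_iff hcard hrn, fun _ => h.circuit'_and_ncard_eq_iff,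
    fun _ => h.isBase_iff hlt hrn⟩

theorem stmt3 {α : Type*} (S : Set α) (hS : S.Finite) (n r : ℕ) (hn : S.ncard = n)
    (hr2 : 2 ≤ r) (hrn : r ≤ n)
    (H' : Set (Set α)) (hne : H'.Nonempty) (hsub : ∀ X ∈ H', X ⊆ S)
    (hcard : ∀ X ∈ H', r ≤ X.ncard ∧ X.ncard < n)
    (hint : ∀ X ∈ H', ∀ Y ∈ H', X ≠ Y → (X ∩ Y).ncard ≤ r - 2)
    (Cr : Set (Set α)) (hCr : Cr = {A | A ⊆ S ∧ A.ncard = r ∧ ∃ X ∈ H', A ⊆ X})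
    (H : Set (Set α))
    (hH : H = H' ∪ {A | A ⊆ S ∧ A.ncard = r - 1 ∧
      ∀ D, D ⊆ S → D.ncard = r → A ⊂ D → D ∉ Cr}) :
    ∃ M : Matroid α, M.E = S ∧ M.rk' M.E = r ∧ M.Paving ∧
      (∀ X, M.Hyperplane' X ↔ X ∈ H) ∧
      (∀ C, (M.Circuit' C ∧ C.ncard = r) ↔ C ∈ Cr) ∧
      (∀ B, M.IsBase B ↔ (B ⊆ S ∧ B.ncard = r ∧ B ∉ Cr)) :=
  stmt3_general S hS n r hn hr2 hrn H' hsub hcard hint Cr hCr H hH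
end

section
/- Let S = {1, …, n}, let r ∈ ℕ with 2 ≤ r ≤ n, and let 𝓗′ be a nonempty collection of subsets of S such that every X ∈ 𝓗′ satisfies r ≤ |X| < n, and any two distinct X, Y ∈ 𝓗′ satisfy |X ∩ Y| ≤ r − 2. Define 𝓒_r := {A ⊆ S : |A| = r and A ⊆ X for some X ∈ 𝓗′} and 𝓗 := 𝓗′ ∪ {A ⊆ S : |A| = r − 1 and every r-subset D of S with A ⊂ D satisfies D ∉ 𝓒_r}. Then every (r−1)-subset of S is contained in exactly one member of 𝓗. -/
open Set

theorem stmt4 {α : Type*} (S : Set α) (hS : S.Finite) (n r : ℕ) (hn : S.ncard = n)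
    (hr2 : 2 ≤ r) (hrn : r ≤ n)
    (H' : Set (Set α)) (hne : H'.Nonempty) (hsub : ∀ X ∈ H', X ⊆ S)
    (hcard : ∀ X ∈ H', r ≤ X.ncard ∧ X.ncard < n)
    (hint : ∀ X ∈ H', ∀ Y ∈ H', X ≠ Y → (X ∩ Y).ncard ≤ r - 2)
    (Cr : Set (Set α)) (hCr : Cr = {A | A ⊆ S ∧ A.ncard = r ∧ ∃ X ∈ H', A ⊆ X})
    (H : Set (Set α))
    (hH : H = H' ∪ {A | A ⊆ S ∧ A.ncard = r - 1 ∧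
      ∀ D, D ⊆ S → D.ncard = r → A ⊂ D → D ∉ Cr}) :
    ∀ A, A ⊆ S → A.ncard = r - 1 → ∃! X, X ∈ H ∧ A ⊆ X := by
  intro A hAS hAcard
  have hAfin : A.Finite := hS.subset hAS
  by_cases hx : ∃ X ∈ H', A ⊆ X
  · obtain ⟨X, hXH, hAX⟩ := hx
    refine ⟨X, ⟨by rw [hH]; exact Or.inl hXH, hAX⟩, ?_⟩
    rintro Y ⟨hYH, hAY⟩
    rw [hH] at hYH
    rcases hYH with hY | hY
    · by_contra hne'
      have h1 : (Y ∩ X).ncard ≤ r - 2 := hint Y hY X hXH hne'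
      have h2 : r - 1 ≤ (Y ∩ X).ncard := by
        rw [← hAcard]
        exact Set.ncard_le_ncard (Set.subset_inter hAY hAX)
          ((hS.subset (hsub Y hY)).inter_of_left X)
      omega
    · obtain ⟨hYS, hYcard, hYprop⟩ := hY
      have hAeqY : A = Y := Set.eq_of_subset_of_ncard_le hAY
        (by rw [hYcard, hAcard]) (hS.subset hYS)
      have hAX' : A ⊂ X := hAX.ssubset_of_ne (by
        intro h; have := (hcard X hXH).1; rw [← h, hAcard] at this; omega)
      obtain ⟨x, hxX, hxA⟩ := Set.exists_of_ssubset hAX'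
      have hDS : insert x A ⊆ S := Set.insert_subset (hsub X hXH hxX) hAS
      have hDcard : (insert x A).ncard = r := by
        rw [Set.ncard_insert_of_notMem hxA hAfin, hAcard]; omega
      have hDCr : insert x A ∈ Cr := by
        rw [hCr]
        exact ⟨hDS, hDcard, X, hXH, Set.insert_subset hxX hAX⟩
      exact absurd hDCr
        (hYprop (insert x A) hDS hDcard (hAeqY ▸ Set.ssubset_insert hxA))
  · push_neg at hx
    refine ⟨A, ⟨?_, subset_rfl⟩, ?_⟩
    · rw [hH]
      refine Or.inr ⟨hAS, hAcard, ?_⟩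
      intro D hDS hDr hAD hDCr
      rw [hCr] at hDCr
      obtain ⟨_, _, X, hXH, hDX⟩ := hDCr
      exact hx X hXH (hAD.subset.trans hDX)
    · rintro Y ⟨hYH, hAY⟩
      rw [hH] at hYH
      rcases hYH with h | h
      · exact absurd hAY (hx Y h)
      · exact (Set.eq_of_subset_of_ncard_le hAY
          (by rw [h.2.1, hAcard]) (hS.subset h.1)).symm
end

section
/- Let S be a finite set with |S| = n ≥ 3 and let 2 ≤ r ≤ n − 1. Let 𝓒 be a collection of r-subsets of S such that any two distinct X, Y ∈ 𝓒 satisfy |X ∩ Y| ≤ r − 2. Then there exists a matroid M on S of rank r whose set of bases is exactly the set of r-subsets of S not belonging to 𝓒. -/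
open Set

/-! Declare independent the sets `I ⊆ S` with `|I| ≤ r` and `I ∉ C`. The only nontrivial axiom
is augmentation of an `(r-1)`-set `I` by an `r`-set `J`: if `insert e I ∈ C` for every `e ∈ J \ I`,
these members of `C` all contain the `r - 1` elements of `I`, so the intersection bound forces
them to coincide, and then `J = insert e I ∈ C`.
The same observation, applied to two `r`-subsets of `S` through a common `(r-1)`-set, produces an
`r`-set outside `C`, which is then a basis. -/

namespace Matroid

variable {α : Type*} {M : Matroid α} {B K : Set α}

lemma isBase_iff_indep_ncard_eq [M.RankFinite] (hK : M.IsBase K) :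
    M.IsBase B ↔ M.Indep B ∧ B.ncard = K.ncard := by
  refine ⟨fun hB ↦ ⟨hB.indep, hB.ncard_eq_ncard_of_isBase hK⟩, fun ⟨hBi, hBK⟩ ↦ ?_⟩
  obtain ⟨B', hB', hBB'⟩ := hBi.exists_isBase_superset
  rwa [eq_of_subset_of_ncard_le hBB' (by rw [hB'.ncard_eq_ncard_of_isBase hK, hBK]) hB'.finite]

lemma Indep.isBase_of_forall_ncard_le [M.RankFinite] (hK : M.Indep K)
    (h : ∀ J, M.Indep J → J.ncard ≤ K.ncard) : M.IsBase K :=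
  hK.isBase_of_maximal fun J hJ hKJ ↦ eq_of_subset_of_ncard_le hKJ (h J hJ) hJ.finite

lemma rk'_ground_eq_ncard [M.RankFinite] (hB : M.IsBase B) : M.rk' M.E = B.ncard := by
  refine IsGreatest.csSup_eq ⟨⟨B, hB.subset_ground, hB.indep, rfl⟩, ?_⟩
  rintro _ ⟨I, -, hI, rfl⟩
  obtain ⟨B', hB', hIB'⟩ := hI.exists_isBase_superset
  exact (ncard_le_ncard hIB' hB'.finite).trans (hB'.ncard_eq_ncard_of_isBase hB).le

end Matroid

section SparsePaving

variable {α : Type*} {S I J : Set α} {r : ℕ} {C : Set (Set α)}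

lemma eq_of_insert_mem_of_insert_mem (hr : 2 ≤ r)
    (hint : ∀ X ∈ C, ∀ Y ∈ C, X ≠ Y → (X ∩ Y).ncard ≤ r - 2) (hI : I.Finite)
    (hIr : I.ncard + 1 = r) {e f : α} (heI : e ∉ I) (he : insert e I ∈ C) (hf : insert f I ∈ C) :
    e = f := by
  by_contra hef
  have hne : insert e I ≠ insert f I := fun h ↦
    (h ▸ mem_insert e I : e ∈ insert f I).elim hef heI
  have hle := ncard_le_ncard (subset_inter (subset_insert e I) (subset_insert f I))
    ((hI.insert e).inter_of_left _)
  have := hint _ he _ hf hne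
  omega

lemma exists_subset_ncard_eq_notMem (hS : S.Finite) (hr : 2 ≤ r) (hrS : r < S.ncard)
    (hint : ∀ X ∈ C, ∀ Y ∈ C, X ≠ Y → (X ∩ Y).ncard ≤ r - 2) :
    ∃ K ⊆ S, K.ncard = r ∧ K ∉ C := by
  obtain ⟨I, hIS, hIr⟩ := exists_subset_card_eq (s := S) (n := r - 1) (by omega)
  have hIfin : I.Finite := hS.subset hIS
  have hSI : 1 < (S \ I).ncard := by rw [ncard_sdiff hIS hIfin]; omega
  obtain ⟨a, ⟨haS, haI⟩, b, ⟨hbS, hbI⟩, hab⟩ := (one_lt_ncard_iff_nontrivial_and_finite.mp hSI).1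
  by_contra! hC
  have hmem : ∀ x ∈ S, x ∉ I → insert x I ∈ C := fun x hx hxI ↦
    hC _ (insert_subset hx hIS) (by rw [ncard_insert_of_notMem hxI hIfin]; omega)
  exact hab <| eq_of_insert_mem_of_insert_mem hr hint hIfin (by omega) haI
    (hmem a haS haI) (hmem b hbS hbI)

def SparsePavingIndep (S : Set α) (r : ℕ) (C : Set (Set α)) (I : Set α) : Prop :=
  I ⊆ S ∧ I.ncard ≤ r ∧ I ∉ C

lemma sparsePavingIndep_empty (hr : 0 < r) (hC : ∀ X ∈ C, X.ncard = r) :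
    SparsePavingIndep S r C ∅ :=
  ⟨empty_subset S, by simp, fun h ↦ hr.ne (by simpa using hC ∅ h)⟩

lemma SparsePavingIndep.subset (hS : S.Finite) (hC : ∀ X ∈ C, X.ncard = r)
    (hJ : SparsePavingIndep S r C J) (hIJ : I ⊆ J) : SparsePavingIndep S r C I := by
  obtain ⟨hJS, hJr, hJC⟩ := hJ
  have hJfin := hS.subset hJS
  refine ⟨hIJ.trans hJS, (ncard_le_ncard hIJ hJfin).trans hJr, fun hIC ↦ hJC ?_⟩
  rwa [← eq_of_subset_of_ncard_le hIJ ((hC I hIC).symm ▸ hJr) hJfin]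

lemma SparsePavingIndep.exists_insert_of_ncard_lt (hS : S.Finite) (hr : 2 ≤ r)
    (hC : ∀ X ∈ C, X.ncard = r) (hint : ∀ X ∈ C, ∀ Y ∈ C, X ≠ Y → (X ∩ Y).ncard ≤ r - 2)
    (hI : SparsePavingIndep S r C I) (hJ : SparsePavingIndep S r C J) (hIJ : I.ncard < J.ncard) :
    ∃ e ∈ J, e ∉ I ∧ SparsePavingIndep S r C (insert e I) := by
  have hIfin := hS.subset hI.1
  by_contra! h
  have hmem : ∀ f ∈ J, f ∉ I → insert f I ∈ C := fun f hf hfI ↦ by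
    by_contra hfC
    refine h f hf hfI ⟨insert_subset (hJ.1 hf) hI.1, ?_, hfC⟩
    rw [ncard_insert_of_notMem hfI hIfin]
    exact hIJ.trans_le hJ.2.1
  obtain ⟨e, heJ, heI⟩ := exists_mem_notMem_of_ncard_lt_ncard hIJ hIfin
  have heC := hmem e heJ heI
  have hIr : I.ncard + 1 = r := by rw [← ncard_insert_of_notMem heI hIfin, hC _ heC]
  have hJe : J ⊆ insert e I := fun f hf ↦ by
    by_cases hfI : f ∈ I
    · exact mem_insert_of_mem e hfI
    · rw [eq_of_insert_mem_of_insert_mem hr hint hIfin hIr hfI (hmem f hf hfI) heC]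
      exact mem_insert e I
  have hJeq : J = insert e I :=
    eq_of_subset_of_ncard_le hJe (by rw [hC _ heC]; omega) (hIfin.insert e)
  exact hJ.2.2 (hJeq ▸ heC)

def Matroid.sparsePaving (hS : S.Finite) (hr : 2 ≤ r) (hC : ∀ X ∈ C, X.ncard = r)
    (hint : ∀ X ∈ C, ∀ Y ∈ C, X ≠ Y → (X ∩ Y).ncard ≤ r - 2) : Matroid α :=
  (IndepMatroid.ofFinite hS (SparsePavingIndep S r C) (sparsePavingIndep_empty (by omega) hC)
    (fun _ _ hJ hIJ ↦ hJ.subset hS hC hIJ)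
    (fun _ _ hI hJ hIJ ↦ hI.exists_insert_of_ncard_lt hS hr hC hint hJ hIJ)
    (fun _ hI ↦ hI.1)).matroid

lemma Matroid.sparsePaving_indep_iff {hS : S.Finite} {hr : 2 ≤ r} {hC : ∀ X ∈ C, X.ncard = r}
    {hint : ∀ X ∈ C, ∀ Y ∈ C, X ≠ Y → (X ∩ Y).ncard ≤ r - 2} :
    (Matroid.sparsePaving hS hr hC hint).Indep I ↔ SparsePavingIndep S r C I :=
  Iff.rfl

instance (hS : S.Finite) (hr : 2 ≤ r) (hC : ∀ X ∈ C, X.ncard = r)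
    (hint : ∀ X ∈ C, ∀ Y ∈ C, X ≠ Y → (X ∩ Y).ncard ≤ r - 2) :
    (Matroid.sparsePaving hS hr hC hint).Finite :=
  ⟨hS⟩

end SparsePaving

theorem stmt6_general {α : Type*} (S : Set α) (hS : S.Finite) (n r : ℕ) (hn : S.ncard = n)
    (hr2 : 2 ≤ r) (hrn : r ≤ n - 1)
    (C : Set (Set α)) (hsub : ∀ X ∈ C, X ⊆ S ∧ X.ncard = r)
    (hint : ∀ X ∈ C, ∀ Y ∈ C, X ≠ Y → (X ∩ Y).ncard ≤ r - 2) :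
    ∃ M : Matroid α, M.E = S ∧ M.rk' M.E = r ∧
      (∀ B, M.IsBase B ↔ (B ⊆ S ∧ B.ncard = r ∧ B ∉ C)) := by
  obtain ⟨K, hKS, hKr, hKC⟩ := exists_subset_ncard_eq_notMem hS hr2 (by omega) hint
  let M := Matroid.sparsePaving hS hr2 (fun X hX ↦ (hsub X hX).2) hint
  have hK : M.IsBase K :=
    (Matroid.sparsePaving_indep_iff.mpr ⟨hKS, hKr.le, hKC⟩).isBase_of_forall_ncard_le
      fun J hJ ↦ hKr ▸ (Matroid.sparsePaving_indep_iff.mp hJ).2.1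
  refine ⟨M, rfl, by rw [Matroid.rk'_ground_eq_ncard hK, hKr], fun B ↦ ?_⟩
  rw [Matroid.isBase_iff_indep_ncard_eq hK, Matroid.sparsePaving_indep_iff, hKr]
  exact ⟨fun ⟨⟨hBS, _, hBC⟩, hBr⟩ ↦ ⟨hBS, hBr, hBC⟩, fun ⟨hBS, hBr, hBC⟩ ↦ ⟨⟨hBS, hBr.le, hBC⟩, hBr⟩⟩

theorem stmt6 {α : Type*} (S : Set α) (hS : S.Finite) (n r : ℕ) (hn : S.ncard = n)
    (hn3 : 3 ≤ n) (hr2 : 2 ≤ r) (hrn : r ≤ n - 1)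
    (C : Set (Set α)) (hsub : ∀ X ∈ C, X ⊆ S ∧ X.ncard = r)
    (hint : ∀ X ∈ C, ∀ Y ∈ C, X ≠ Y → (X ∩ Y).ncard ≤ r - 2) :
    ∃ M : Matroid α, M.E = S ∧ M.rk' M.E = r ∧
      (∀ B, M.IsBase B ↔ (B ⊆ S ∧ B.ncard = r ∧ B ∉ C)) :=
  stmt6_general S hS n r hn hr2 hrn C hsub hint
end

section
/- Let S be a finite set with |S| = n ≥ 3 and let 2 ≤ r ≤ n − 1. Let 𝓒 be a collection of r-subsets of S such that any two distinct X, Y ∈ 𝓒 satisfy |X ∩ Y| ≤ r − 2, and set 𝓑 := {A ⊆ S : |A| = r, A ∉ 𝓒}. Then for all B₁, B₂ ∈ 𝓑 and every x ∈ B₁ \ B₂, there exists y ∈ B₂ \ B₁ such that (B₁ \ {x}) ∪ {y} ∈ 𝓑. -/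
open Set

/-!
Fix `x ∈ B₁ \ B₂` and put `A := B₁ \ {x}`, of size `r - 1`. Two distinct sets `insert y A` and
`insert y' A` meet in `A`, which is too large for both to lie in `𝓒`; so whenever `B₂ \ B₁` has
two elements, one of them is a valid exchange. Otherwise `B₂ \ B₁ = {y}`, and then
`insert y A = B₂` itself lies in `𝓑`.
-/

theorem Set.eq_of_insert_mem_of_insert_mem {α : Type*} {C : Set (Set α)} {k : ℕ}
    (hC : ∀ X ∈ C, ∀ Y ∈ C, X ≠ Y → (X ∩ Y).ncard ≤ k) {A : Set α} (hA : A.Finite)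
    (hk : k < A.ncard) {y y' : α} (hy : y ∉ A) (hyC : insert y A ∈ C)
    (hy'C : insert y' A ∈ C) : y = y' := by
  by_contra hne
  have hne' : insert y A ≠ insert y' A := fun h ↦
    (h ▸ mem_insert y A : y ∈ insert y' A).elim hne hy
  have hAinter : A ⊆ insert y A ∩ insert y' A :=
    subset_inter (subset_insert y A) (subset_insert y' A)
  have := ncard_le_ncard hAinter ((hA.insert y).inter_of_left _)
  have := hC _ hyC _ hy'C hne'
  omega

theorem Set.eq_insert_sdiff_singleton_of_sdiff_eq_singleton {α : Type*} {B₁ B₂ : Set α}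
    (hB₁ : B₁.Finite) (hB₂ : B₂.Finite) (hcard : B₁.ncard = B₂.ncard) {x y : α} (hx : x ∈ B₁ \ B₂)
    (hy : B₂ \ B₁ = {y}) : B₂ = insert y (B₁ \ {x}) := by
  have hx' : B₁ \ B₂ = {x} := by
    refine (eq_of_subset_of_ncard_le (singleton_subset_iff.2 hx) ?_ hB₁.sdiff).symm
    rw [(ncard_eq_ncard_iff_ncard_sdiff_eq_ncard_sdiff hB₁ hB₂).1 hcard, hy, ncard_singleton,
      ncard_singleton]
  ext z
  have h₁ := Set.ext_iff.1 hx' z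
  have h₂ := Set.ext_iff.1 hy z
  simp only [mem_sdiff, mem_singleton_iff, mem_insert_iff] at h₁ h₂ ⊢
  tauto

theorem stmt9_general {α : Type*} (S : Set α) (hS : S.Finite) (r : ℕ) (hr2 : 2 ≤ r) (C : Set (Set α))
    (hint : ∀ X ∈ C, ∀ Y ∈ C, X ≠ Y → (X ∩ Y).ncard ≤ r - 2)
    (B : Set (Set α)) (hB : B = {A | A ⊆ S ∧ A.ncard = r ∧ A ∉ C}) :
    ∀ B₁ ∈ B, ∀ B₂ ∈ B, ∀ x ∈ B₁ \ B₂,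
      ∃ y ∈ B₂ \ B₁, (B₁ \ {x}) ∪ {y} ∈ B := by
  subst hB
  rintro B₁ ⟨hB₁S, hB₁r, hB₁C⟩ B₂ ⟨hB₂S, hB₂r, hB₂C⟩ x hx
  simp only [union_singleton]
  have hB₁ : B₁.Finite := hS.subset hB₁S
  have hB₂ : B₂.Finite := hS.subset hB₂S
  have hcard : B₁.ncard = B₂.ncard := hB₁r.trans hB₂r.symm
  have hexchange : ∀ y ∈ B₂ \ B₁, insert y (B₁ \ {x}) ∉ C →
      insert y (B₁ \ {x}) ∈ {A | A ⊆ S ∧ A.ncard = r ∧ A ∉ C} := fun y hy hyC ↦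
    ⟨insert_subset (hB₂S hy.1) (sdiff_subset.trans hB₁S),
      by rw [ncard_exchange hy.2 hx.1, hB₁r], hyC⟩
  have hdiff : (B₂ \ B₁).ncard = (B₁ \ B₂).ncard :=
    ((ncard_eq_ncard_iff_ncard_sdiff_eq_ncard_sdiff hB₁ hB₂).1 hcard).symm
  have hpos : 0 < (B₁ \ B₂).ncard := (ncard_pos hB₁.sdiff).2 ⟨x, hx⟩
  obtain hone | htwo := (Nat.succ_le_of_lt hpos).eq_or_lt
  · obtain ⟨y, hy⟩ := ncard_eq_one.1 (hdiff.trans hone.symm)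
    refine ⟨y, hy ▸ mem_singleton y, ?_⟩
    rw [← eq_insert_sdiff_singleton_of_sdiff_eq_singleton hB₁ hB₂ hcard hx hy]
    exact ⟨hB₂S, hB₂r, hB₂C⟩
  · obtain ⟨y, y', hy, hy', hne⟩ := (one_lt_ncard_iff hB₂.sdiff).1 (hdiff ▸ htwo)
    have hA : r - 2 < (B₁ \ {x}).ncard := by
      rw [ncard_sdiff_singleton_of_mem hx.1]
      omega
    by_cases hyC : insert y (B₁ \ {x}) ∈ C
    · refine ⟨y', hy', hexchange y' hy' fun hy'C ↦ hne ?_⟩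
      exact eq_of_insert_mem_of_insert_mem hint hB₁.sdiff hA (fun h ↦ hy.2 h.1) hyC hy'C
    · exact ⟨y, hy, hexchange y hy hyC⟩

theorem stmt9 {α : Type*} (S : Set α) (hS : S.Finite) (n r : ℕ) (hn : S.ncard = n)
    (hn3 : 3 ≤ n) (hr2 : 2 ≤ r) (hrn : r ≤ n - 1)
    (C : Set (Set α)) (hsub : ∀ X ∈ C, X ⊆ S ∧ X.ncard = r)
    (hint : ∀ X ∈ C, ∀ Y ∈ C, X ≠ Y → (X ∩ Y).ncard ≤ r - 2)
    (B : Set (Set α)) (hB : B = {A | A ⊆ S ∧ A.ncard = r ∧ A ∉ C}) :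
    ∀ B₁ ∈ B, ∀ B₂ ∈ B, ∀ x ∈ B₁ \ B₂,
      ∃ y ∈ B₂ \ B₁, (B₁ \ {x}) ∪ {y} ∈ B :=
  stmt9_general S hS r hr2 C hint B hB
end
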